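/- In the setup below, for all integers n ≥ 0 and m ≥ 1: ε₁ⁿ·ε_m = Σ_{i=0}^{n} ((m+i)!/m!)·h_{n−i}(q_m, q_{m+1}, …, q_{m+i})·ε_{m+i}. -/

import Mathlib

/-! Induction on `n`. By the Chevalley rule, multiplication by `ε₁` acts on the coefficients of
`∑ cᵢ ε_{m+i}` through a bidiagonal matrix with diagonal `q_{m+i}` and subdiagonal `m + i + 1`.
The claimed coefficients `(m+1)^{(i)} h_{n-i}(q_m, …, q_{m+i})`, with the rising factorial
`(m+1)^{(i)} = (m+i)!/m!`, obey exactly this recursion, by the Pascal-type rule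
`h_{d+1}(S ∪ {k}) = x_k h_d(S ∪ {k}) + h_{d+1}(S)`. -/

open Finset

/-- `hsum d s x` is the complete homogeneous symmetric polynomial of degree `d` in the
variables `x i`, `i ∈ s`: the sum of all monomials of degree `d` in these variables
(with `hsum 0 s x = 1`). -/
def hsum {R : Type*} [CommSemiring R] (d : ℕ) (s : Finset ℕ) (x : ℕ → R) : R :=
  ∑ μ ∈ s.sym d, ((μ : Multiset ℕ).map x).prod

section hsum

variable {R : Type*} [CommSemiring R]

@[simp]
lemma hsum_zero (s : Finset ℕ) (x : ℕ → R) : hsum 0 s x = 1 := by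
  rw [hsum, sym_zero, sum_singleton]; rfl

lemma hsum_singleton (d k : ℕ) (x : ℕ → R) : hsum d {k} x = x k ^ d := by
  simp [hsum, sym_singleton, Sym.coe_replicate]

lemma hsum_succ_insert (d : ℕ) {s : Finset ℕ} {k : ℕ} (hk : k ∉ s) (x : ℕ → R) :
    hsum (d + 1) (insert k s) x = x k * hsum d (insert k s) x + hsum (d + 1) s x := by
  unfold hsum
  -- monomials divisible by `x k` are `x k` times those of degree `d`, via `μ ↦ μ.erase k`
  rw [← sum_filter_add_sum_filter_not _ (fun μ : Sym ℕ (d + 1) ↦ k ∈ μ), mul_sum]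
  congr 1
  · refine (sum_bij' (fun μ hμ ↦ μ.erase k (mem_filter.1 hμ).2) (fun ν _ ↦ k ::ₛ ν)
      ?_ ?_ (fun μ _ ↦ Sym.cons_erase _) (fun ν _ ↦ Sym.erase_cons_head ν k _) ?_)
    · intro μ hμ
      rw [mem_filter, mem_sym_iff] at hμ
      exact mem_sym_iff.2 fun a ha ↦ hμ.1 a (Multiset.mem_of_mem_erase ha)
    · intro ν hν
      simp only [mem_filter, mem_sym_iff, Sym.mem_cons, true_or, and_true] at hν ⊢
      rintro a (rfl | ha)
      exacts [mem_insert_self _ _, hν a ha]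
    · intro μ hμ
      rw [Sym.coe_erase, ← Multiset.prod_cons, ← Multiset.map_cons,
        Multiset.cons_erase (show k ∈ (μ : Multiset ℕ) from (mem_filter.1 hμ).2)]
  · congr 1
    ext μ
    simp only [mem_filter, mem_sym_iff, mem_insert]
    exact ⟨fun ⟨h, hkμ⟩ a ha ↦ (h a ha).resolve_left (by rintro rfl; exact hkμ ha),
      fun h ↦ ⟨fun a ha ↦ Or.inr (h a ha), fun hkμ ↦ hk (h k hkμ)⟩⟩

lemma hsum_succ_Icc_succ (d : ℕ) {a b : ℕ} (hab : a ≤ b + 1) (x : ℕ → R) :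
    hsum (d + 1) (Icc a (b + 1)) x =
      x (b + 1) * hsum d (Icc a (b + 1)) x + hsum (d + 1) (Icc a b) x := by
  rw [← insert_Icc_right_eq_Icc_add_one hab, hsum_succ_insert d (by simp)]

end hsum

lemma sum_range_smul_bidiagonal {R M : Type*} [CommSemiring R] [AddCommMonoid M] [Module R M]
    (n : ℕ) (a b c c' : ℕ → R) (e : ℕ → M)
    (h_zero : c' 0 = a 0 * c 0) (h_succ : ∀ i < n, c' (i + 1) = a (i + 1) * c (i + 1) + b i * c i)
    (h_last : c' (n + 1) = b n * c n) :
    ∑ i ∈ range (n + 1), c i • (a i • e i + b i • e (i + 1)) =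
      ∑ i ∈ range (n + 2), c' i • e i := by
  have h_mid : ∑ i ∈ range n, c' (i + 1) • e (i + 1) =
      ∑ i ∈ range n, (a (i + 1) • c (i + 1) • e (i + 1) + b i • c i • e (i + 1)) :=
    sum_congr rfl fun i hi ↦ by rw [h_succ i (mem_range.1 hi), add_smul, mul_smul, mul_smul]
  rw [sum_range_succ' (fun i ↦ c' i • e i), sum_range_succ (fun i ↦ c' (i + 1) • e (i + 1)),
    h_mid, h_zero, h_last, sum_add_distrib]
  simp only [smul_add, sum_add_distrib, smul_comm (c _), mul_smul]
  rw [sum_range_succ' (fun i ↦ a i • c i • e i),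
    sum_range_succ (fun i ↦ b i • c i • e (i + 1))]
  abel

section Chevalley

variable {R A : Type*} [CommSemiring R] [CommSemiring A] [Algebra R A]

def chevalleyCoeff (q : ℕ → R) (m n i : ℕ) : R :=
  (m + 1).ascFactorial i • hsum (n - i) (Icc m (m + i)) q

variable (q : ℕ → R) (m : ℕ)

lemma chevalleyCoeff_succ_zero (n : ℕ) :
    chevalleyCoeff q m (n + 1) 0 = q m * chevalleyCoeff q m n 0 := by
  simp [chevalleyCoeff, hsum_singleton, pow_succ']

lemma chevalleyCoeff_succ_succ {n i : ℕ} (hi : i < n) :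
    chevalleyCoeff q m (n + 1) (i + 1) =
      q (m + i + 1) * chevalleyCoeff q m n (i + 1) +
        (m + i + 1 : ℕ) * chevalleyCoeff q m n i := by
  obtain ⟨d, rfl⟩ := Nat.exists_eq_add_of_lt hi
  have h := hsum_succ_Icc_succ d (a := m) (b := m + i) (by omega) q
  simp only [chevalleyCoeff, Nat.ascFactorial_succ, nsmul_eq_mul, ← add_assoc,
    show i + d + 1 + 1 - (i + 1) = d + 1 by omega, show i + d + 1 - (i + 1) = d by omega,
    show i + d + 1 - i = d + 1 by omega, h]
  push_cast
  ring

lemma chevalleyCoeff_succ_self (n : ℕ) :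
    chevalleyCoeff q m (n + 1) (n + 1) = (m + n + 1 : ℕ) * chevalleyCoeff q m n n := by
  simp only [chevalleyCoeff, Nat.ascFactorial_succ, Nat.sub_self, hsum_zero, nsmul_eq_mul]
  push_cast
  ring

theorem pow_mul_eq_sum_chevalleyCoeff {ε : ℕ → A}
    (hchev : ∀ k : ℕ, m ≤ k → ε 1 * ε k = q k • ε k + (k + 1) • ε (k + 1))
    (n : ℕ) :
    ε 1 ^ n * ε m = ∑ i ∈ range (n + 1), chevalleyCoeff q m n i • ε (m + i) := by
  induction n with
  | zero => simp [chevalleyCoeff]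
  | succ n ih =>
    calc ε 1 ^ (n + 1) * ε m
        = ∑ i ∈ range (n + 1), chevalleyCoeff q m n i •
            (q (m + i) • ε (m + i) + ((m + i + 1 : ℕ) : R) • ε (m + (i + 1))) := by
          rw [pow_succ', mul_assoc, ih, mul_sum]
          refine sum_congr rfl fun i _ ↦ ?_
          rw [mul_smul_comm, hchev (m + i) (Nat.le_add_right m i), Nat.cast_smul_eq_nsmul]
          rfl
      _ = ∑ i ∈ range (n + 2), chevalleyCoeff q m (n + 1) i • ε (m + i) :=
          sum_range_smul_bidiagonal n _ _ _ _ _ (chevalleyCoeff_succ_zero q m n)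
            (fun i hi ↦ chevalleyCoeff_succ_succ q m hi) (chevalleyCoeff_succ_self q m n)

end Chevalley

/-- If `ε₁·ε_m = q_m·ε_m + (m+1)·ε_{m+1}` for all `m ≥ 1`, then
`ε₁ⁿ·ε_m = Σ_{i=0}^{n} ((m+i)!/m!)·h_{n−i}(q_m, …, q_{m+i})·ε_{m+i}` for all `n ≥ 0`, `m ≥ 1`. -/
theorem stmt16 {R A : Type*} [CommRing R] [CommRing A] [Algebra R A]
    (q : ℕ → R) (ε : ℕ → A)
    (hchev : ∀ m : ℕ, 1 ≤ m → ε 1 * ε m = q m • ε m + (m + 1) • ε (m + 1)) :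
    ∀ n m : ℕ, 1 ≤ m →
      ε 1 ^ n * ε m = ∑ i ∈ range (n + 1),
        (((m + i).factorial / m.factorial) • hsum (n - i) (Icc m (m + i)) q) • ε (m + i) := by
  intro n m hm
  simpa only [chevalleyCoeff, Nat.ascFactorial_eq_div] using
    pow_mul_eq_sum_chevalleyCoeff q m (fun k hk ↦ hchev k (hm.trans hk)) n
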